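/- Let D ⊂ ℂ^d be a bounded strongly ℂ-convex C² domain with defining function ρ, and define d(ζ, w) := |L(ζ, w)|^{1/2} on bD × bD, where L(ζ, w) = ⟨∂ρ(w), w − ζ⟩ / ‖∂ρ(w)‖. Then d is a quasimetric: there exists q ≥ 1 such that (a) d(ζ, w) = 0 iff ζ = w, (b) d(ζ, w) ≤ q·d(w, ζ), and (c) d(ζ, w) ≤ q·(d(ζ, z) + d(z, w)) for all ζ, z, w ∈ bD. -/

import Mathlib

/-!
Write `g` for the complex gradient and `B(a, b) = ∑ aⱼ bⱼ`, so that
`L(ζ, w) = B(g w, w - ζ) / ‖g w‖`. Bilinearity gives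
`B(g w, w - ζ) + B(g ζ, ζ - w) = B(g w - g ζ, w - ζ)` and
`B(g w, w - ζ) = B(g w, w - z) + B(g z, z - ζ) + B(g w - g z, z - ζ)`.
As `g` is Lipschitz on the compact boundary, the error terms are bounded by products of two
distances, which strong ℂ-convexity `c ‖w - z‖² ≤ |B(g w, w - z)|` absorbs; so
`|B(g w, w - ζ)|^{1/2}` is a quasimetric. Dividing by `‖g w‖`, which is bounded above and away
from `0` on `bD`, changes it only by bounded factors.
-/

open MeasureTheory Bornology

/-- The complex gradient `∂ρ(w)_j = ½(∂ρ/∂x_j − i ∂ρ/∂y_j)` of a real-valued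
function on `ℂ^d`, expressed via the real Fréchet derivative. -/
noncomputable def cderiv {d : ℕ} (ρ : EuclideanSpace ℂ (Fin d) → ℝ)
    (w : EuclideanSpace ℂ (Fin d)) (j : Fin d) : ℂ :=
  (1 / 2 : ℂ) * ((fderiv ℝ ρ w (EuclideanSpace.single j 1) : ℂ)
    - Complex.I * (fderiv ℝ ρ w (EuclideanSpace.single j Complex.I) : ℂ))

/-- `L(z,w) = ⟨∂ρ(w), w − z⟩ / ‖∂ρ(w)‖`. -/
noncomputable def Lfun {d : ℕ} (ρ : EuclideanSpace ℂ (Fin d) → ℝ)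
    (z w : EuclideanSpace ℂ (Fin d)) : ℂ :=
  (∑ j, cderiv ρ w j * (w j - z j)) /
    ((Real.sqrt (∑ j, Complex.normSq (cderiv ρ w j)) : ℝ) : ℂ)

open scoped NNReal

section Quasimetric

variable {X : Type*}

def IsQuasimetricOn (δ : X → X → ℝ) (s : Set X) (q : ℝ) : Prop :=
  (∀ x ∈ s, ∀ y ∈ s, δ x y = 0 ↔ x = y) ∧
  (∀ x ∈ s, ∀ y ∈ s, δ x y ≤ q * δ y x) ∧
  ∀ x ∈ s, ∀ y ∈ s, ∀ z ∈ s, δ x z ≤ q * (δ x y + δ y z)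

namespace IsQuasimetricOn

variable {δ e : X → X → ℝ} {s : Set X} {q : ℝ}

lemma mono (h : IsQuasimetricOn δ s q) (hδ : ∀ x y, 0 ≤ δ x y) {q' : ℝ} (hq : q ≤ q') :
    IsQuasimetricOn δ s q' :=
  ⟨h.1, fun x hx y hy ↦ (h.2.1 x hx y hy).trans (mul_le_mul_of_nonneg_right hq (hδ y x)),
    fun x hx y hy z hz ↦ (h.2.2 x hx y hy z hz).trans
      (mul_le_mul_of_nonneg_right hq (add_nonneg (hδ x y) (hδ y z)))⟩

lemma of_le_mul (h : IsQuasimetricOn e s q) (hq : 0 ≤ q) (he : ∀ x y, 0 ≤ e x y)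
    (hδ : ∀ x y, 0 ≤ δ x y) {a b : ℝ} (hb : 0 ≤ b)
    (hea : ∀ x ∈ s, ∀ y ∈ s, e x y ≤ a * δ x y) (hδb : ∀ x ∈ s, ∀ y ∈ s, δ x y ≤ b * e x y) :
    IsQuasimetricOn δ s (b * q * a) := by
  refine ⟨fun x hx y hy ↦ ⟨fun hxy ↦ ?_, ?_⟩, fun x hx y hy ↦ ?_, fun x hx y hy z hz ↦ ?_⟩
  · refine (h.1 x hx y hy).1 (le_antisymm ?_ (he x y))
    simpa [hxy] using hea x hx y hy
  · rintro rfl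
    refine le_antisymm ?_ (hδ x x)
    simpa [(h.1 x hx x hx).2 rfl] using hδb x hx x hx
  · calc δ x y ≤ b * e x y := hδb x hx y hy
      _ ≤ b * (q * e y x) := by gcongr; exact h.2.1 x hx y hy
      _ ≤ b * (q * (a * δ y x)) := by gcongr; exact hea y hy x hx
      _ = b * q * a * δ y x := by ring
  · calc δ x z ≤ b * e x z := hδb x hx z hz
      _ ≤ b * (q * (e x y + e y z)) := by gcongr; exact h.2.2 x hx y hy z hz
      _ ≤ b * (q * (a * δ x y + a * δ y z)) := by
          gcongr
          exacts [hea x hx y hy, hea y hy z hz]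
      _ = b * q * a * (δ x y + δ y z) := by ring

end IsQuasimetricOn

lemma isQuasimetricOn_sqrt {D : X → X → ℝ} {s : Set X} {A : ℝ} (hA : 0 ≤ A)
    (hD : ∀ x y, 0 ≤ D x y) (hD_eq_zero : ∀ x ∈ s, ∀ y ∈ s, D x y = 0 ↔ x = y)
    (hD_symm : ∀ x ∈ s, ∀ y ∈ s, D x y ≤ A * D y x)
    (hD_triangle : ∀ x ∈ s, ∀ y ∈ s, ∀ z ∈ s, D x z ≤ A * (√(D x y) + √(D y z)) ^ 2) :
    IsQuasimetricOn (fun x y ↦ √(D x y)) s √A := by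
  refine ⟨fun x hx y hy ↦ ?_, fun x hx y hy ↦ ?_, fun x hx y hy z hz ↦ ?_⟩
  · rw [Real.sqrt_eq_zero (hD x y), hD_eq_zero x hx y hy]
  · rw [← Real.sqrt_mul hA]
    exact Real.sqrt_le_sqrt (hD_symm x hx y hy)
  · rw [← Real.sqrt_sq (by positivity : 0 ≤ √(D x y) + √(D y z)), ← Real.sqrt_mul hA]
    exact Real.sqrt_le_sqrt (hD_triangle x hx y hy z hz)

end Quasimetric

section Bilinear

variable {𝕜 E F : Type*} [NontriviallyNormedField 𝕜] [NormedAddCommGroup E] [NormedSpace 𝕜 E]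
  [NormedAddCommGroup F] [NormedSpace 𝕜 F] (B : E →L[𝕜] E →L[𝕜] F) (g : E → E)

lemma apply_sub_add_apply_sub (x y : E) :
    B (g y) (y - x) + B (g x) (x - y) = B (g y - g x) (y - x) := by
  rw [← neg_sub y x]
  simp only [map_sub, map_neg, sub_apply]
  abel

lemma apply_sub_eq_add_add (x y z : E) :
    B (g z) (z - x) = B (g z) (z - y) + B (g y) (y - x) + B (g z - g y) (y - x) := by
  rw [← sub_add_sub_cancel z y x]
  simp only [map_add, map_sub, sub_apply]
  abel

variable {B g} {s : Set E} {c : ℝ} {K : ℝ≥0} (hc : 0 < c) (hg : LipschitzOnWith K g s)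
  (hlow : ∀ x ∈ s, ∀ y ∈ s, c * ‖y - x‖ ^ 2 ≤ ‖B (g y) (y - x)‖)
include hc hg hlow

lemma norm_apply_sub_le_mul_norm_apply_sub {x y : E} (hx : x ∈ s) (hy : y ∈ s) :
    ‖B (g y) (y - x)‖ ≤ (1 + ‖B‖ * K / c) * ‖B (g x) (x - y)‖ := by
  have hsum : ‖B (g y) (y - x) + B (g x) (x - y)‖ ≤ ‖B‖ * K / c * (c * ‖x - y‖ ^ 2) := by
    rw [apply_sub_add_apply_sub]
    calc ‖B (g y - g x) (y - x)‖ ≤ ‖B‖ * ‖g y - g x‖ * ‖y - x‖ := B.le_opNorm₂ _ _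
      _ ≤ ‖B‖ * (K * ‖y - x‖) * ‖y - x‖ := by gcongr; exact hg.norm_sub_le hy hx
      _ = ‖B‖ * K / c * (c * ‖x - y‖ ^ 2) := by rw [norm_sub_rev y x]; field_simp
  calc ‖B (g y) (y - x)‖
      ≤ ‖B (g y) (y - x) + B (g x) (x - y)‖ + ‖B (g x) (x - y)‖ := norm_le_add_norm_add _ _
    _ ≤ ‖B‖ * K / c * ‖B (g x) (x - y)‖ + ‖B (g x) (x - y)‖ := by
        gcongr
        exact hsum.trans (by gcongr; exact hlow y hy x hx)
    _ = (1 + ‖B‖ * K / c) * ‖B (g x) (x - y)‖ := by ring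

lemma norm_apply_sub_le_mul_sq_add {x y z : E} (hx : x ∈ s) (hy : y ∈ s) (hz : z ∈ s) :
    ‖B (g z) (z - x)‖ ≤
      (1 + ‖B‖ * K / c) * (√‖B (g y) (y - x)‖ + √‖B (g z) (z - y)‖) ^ 2 := by
  set u := √‖B (g y) (y - x)‖
  set v := √‖B (g z) (z - y)‖
  have hu : u ^ 2 = ‖B (g y) (y - x)‖ := Real.sq_sqrt (norm_nonneg _)
  have hv : v ^ 2 = ‖B (g z) (z - y)‖ := Real.sq_sqrt (norm_nonneg _)
  have hcross : c * (‖z - y‖ * ‖y - x‖) ≤ v * u := by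
    refine (pow_le_pow_iff_left₀ (by positivity) (by positivity) two_ne_zero).1 ?_
    calc (c * (‖z - y‖ * ‖y - x‖)) ^ 2 = (c * ‖z - y‖ ^ 2) * (c * ‖y - x‖ ^ 2) := by ring
      _ ≤ v ^ 2 * u ^ 2 := by
          rw [hu, hv]
          gcongr
          exacts [hlow y hy z hz, hlow x hx y hy]
      _ = (v * u) ^ 2 := by ring
  have hthree : ‖B (g z) (z - x)‖ ≤ v ^ 2 + u ^ 2 + ‖B‖ * K / c * (c * (‖z - y‖ * ‖y - x‖)) := by
    rw [apply_sub_eq_add_add B g x y z, hu, hv]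
    refine norm_add₃_le.trans (add_le_add le_rfl ?_)
    calc ‖B (g z - g y) (y - x)‖ ≤ ‖B‖ * ‖g z - g y‖ * ‖y - x‖ := B.le_opNorm₂ _ _
      _ ≤ ‖B‖ * (K * ‖z - y‖) * ‖y - x‖ := by gcongr; exact hg.norm_sub_le hz hy
      _ = ‖B‖ * K / c * (c * (‖z - y‖ * ‖y - x‖)) := by field_simp
  have hk : 0 ≤ ‖B‖ * K / c := by positivity
  have hu0 : 0 ≤ u := Real.sqrt_nonneg _
  have hv0 : 0 ≤ v := Real.sqrt_nonneg _
  calc ‖B (g z) (z - x)‖ ≤ v ^ 2 + u ^ 2 + ‖B‖ * K / c * (v * u) :=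
        hthree.trans (by gcongr)
    _ ≤ (1 + ‖B‖ * K / c) * (u + v) ^ 2 := by nlinarith [mul_nonneg hk (mul_nonneg hu0 hv0)]

theorem isQuasimetricOn_sqrt_norm_apply_sub :
    IsQuasimetricOn (fun x y ↦ √‖B (g y) (y - x)‖) s √(1 + ‖B‖ * K / c) := by
  refine isQuasimetricOn_sqrt (by positivity) (fun _ _ ↦ norm_nonneg _)
    (fun x hx y hy ↦ ⟨fun h ↦ ?_, fun h ↦ by simp [h]⟩)
    (fun x hx y hy ↦ norm_apply_sub_le_mul_norm_apply_sub hc hg hlow hx hy)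
    (fun x hx y hy z hz ↦ norm_apply_sub_le_mul_sq_add hc hg hlow hx hy hz)
  have hyx : ‖y - x‖ ^ 2 ≤ 0 :=
    le_of_mul_le_mul_left (by rw [mul_zero, ← h]; exact hlow x hx y hy) hc
  simpa [sub_eq_zero, eq_comm] using hyx

theorem exists_isQuasimetricOn_sqrt_norm_apply_sub_div_norm (hs : IsCompact s)
    (hg0 : ∀ x ∈ s, g x ≠ 0) :
    ∃ q, 1 ≤ q ∧ IsQuasimetricOn (fun x y ↦ √(‖B (g y) (y - x)‖ / ‖g y‖)) s q := by
  obtain ⟨m, hm, hgm⟩ := hs.exists_forall_le' hg.continuousOn.norm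
    (fun x hx ↦ norm_pos_iff.2 (hg0 x hx))
  obtain ⟨M, hgM⟩ := hs.exists_bound_of_continuousOn hg.continuousOn
  have h : IsQuasimetricOn (fun x y ↦ √(‖B (g y) (y - x)‖ / ‖g y‖)) s
      ((√m)⁻¹ * √(1 + ‖B‖ * K / c) * √M) := by
    refine (isQuasimetricOn_sqrt_norm_apply_sub hc hg hlow).of_le_mul (Real.sqrt_nonneg _)
      (fun _ _ ↦ Real.sqrt_nonneg _) (fun _ _ ↦ Real.sqrt_nonneg _)
      (inv_nonneg.2 (Real.sqrt_nonneg m)) (fun x _ y hy ↦ ?_) (fun x _ y hy ↦ ?_)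
    · have hy0 : 0 < ‖g y‖ := hm.trans_le (hgm y hy)
      calc √‖B (g y) (y - x)‖ = √‖g y‖ * √(‖B (g y) (y - x)‖ / ‖g y‖) := by
            rw [← Real.sqrt_mul hy0.le, mul_div_cancel₀ _ hy0.ne']
        _ ≤ √M * √(‖B (g y) (y - x)‖ / ‖g y‖) := by gcongr; exact hgM y hy
    · rw [Real.sqrt_div' _ (norm_nonneg _), ← div_eq_inv_mul]
      gcongr
      exact hgm y hy
  exact ⟨_, le_max_left _ _, h.mono (fun _ _ ↦ Real.sqrt_nonneg _) (le_max_right _ _)⟩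

end Bilinear

noncomputable def euclideanDotProduct (𝕜 ι : Type*) [RCLike 𝕜] [Fintype ι] :
    EuclideanSpace 𝕜 ι →L[𝕜] EuclideanSpace 𝕜 ι →L[𝕜] 𝕜 :=
  ∑ j, (ContinuousLinearMap.mul 𝕜 𝕜).bilinearComp (EuclideanSpace.proj j) (EuclideanSpace.proj j)

lemma euclideanDotProduct_apply {𝕜 ι : Type*} [RCLike 𝕜] [Fintype ι]
    (a b : EuclideanSpace 𝕜 ι) : euclideanDotProduct 𝕜 ι a b = ∑ j, a j * b j := by
  simp [euclideanDotProduct]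

section ComplexGradient

variable {d : ℕ} (ρ : EuclideanSpace ℂ (Fin d) → ℝ)

noncomputable def complexGradient (w : EuclideanSpace ℂ (Fin d)) : EuclideanSpace ℂ (Fin d) :=
  WithLp.toLp 2 (cderiv ρ w)

lemma euclideanDotProduct_complexGradient (z w : EuclideanSpace ℂ (Fin d)) :
    euclideanDotProduct ℂ (Fin d) (complexGradient ρ w) (w - z) =
      ∑ j, cderiv ρ w j * (w j - z j) := by
  simp [euclideanDotProduct_apply, complexGradient]

lemma norm_Lfun (z w : EuclideanSpace ℂ (Fin d)) :
    ‖Lfun ρ z w‖ =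
      ‖euclideanDotProduct ℂ (Fin d) (complexGradient ρ w) (w - z)‖ / ‖complexGradient ρ w‖ := by
  rw [euclideanDotProduct_complexGradient]
  simp [Lfun, EuclideanSpace.norm_eq, complexGradient, Complex.normSq_eq_norm_sq,
    abs_of_nonneg (Real.sqrt_nonneg _)]

variable {ρ}

lemma contDiff_complexGradient {n : WithTop ℕ∞} (hρ : ContDiff ℝ (n + 1) ρ) :
    ContDiff ℝ n (complexGradient ρ) := by
  have hdρ := hρ.fderiv_right le_rfl
  have hofReal : ContDiff ℝ n ((↑) : ℝ → ℂ) := Complex.ofRealCLM.contDiff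
  refine (contDiff_piLp 2).2 fun j ↦ ?_
  simp only [complexGradient, cderiv]
  fun_prop

end ComplexGradient

theorem stmt8_general (d : ℕ) (ρ : EuclideanSpace ℂ (Fin d) → ℝ)
    (hρ : ContDiff ℝ 2 ρ)
    (hbd : IsBounded {z | ρ z < 0})
    (hne : {z | ρ z < 0}.Nonempty)
    (hconv : ∃ c > (0 : ℝ), ∀ z ∈ closure {z | ρ z < 0}, ∀ w ∈ frontier {z | ρ z < 0},
      c * ‖w - z‖ ^ 2 ≤ ‖∑ j, cderiv ρ w j * (w j - z j)‖) :
    ∃ q : ℝ, 1 ≤ q ∧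
      (∀ ζ ∈ frontier {z | ρ z < 0}, ∀ w ∈ frontier {z | ρ z < 0},
        (Real.sqrt (‖Lfun ρ ζ w‖) = 0 ↔ ζ = w)) ∧
      (∀ ζ ∈ frontier {z | ρ z < 0}, ∀ w ∈ frontier {z | ρ z < 0},
        Real.sqrt (‖Lfun ρ ζ w‖) ≤ q * Real.sqrt (‖Lfun ρ w ζ‖)) ∧
      (∀ ζ ∈ frontier {z | ρ z < 0}, ∀ z₀ ∈ frontier {z | ρ z < 0},
        ∀ w ∈ frontier {z | ρ z < 0},
        Real.sqrt (‖Lfun ρ ζ w‖) ≤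
          q * (Real.sqrt (‖Lfun ρ ζ z₀‖) + Real.sqrt (‖Lfun ρ z₀ w‖))) := by
  obtain ⟨c, hc, hconv⟩ := hconv
  obtain ⟨x, hx⟩ := hne
  set D := {z | ρ z < 0}
  have hlow : ∀ z ∈ closure D, ∀ w ∈ frontier D, c * ‖w - z‖ ^ 2 ≤
      ‖euclideanDotProduct ℂ (Fin d) (complexGradient ρ w) (w - z)‖ := by
    simpa only [euclideanDotProduct_complexGradient] using hconv
  have hcompact : IsCompact (frontier D) :=
    Metric.isCompact_of_isClosed_isBounded isClosed_frontier
      (hbd.closure.subset frontier_subset_closure)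
  obtain ⟨K, hlip⟩ := ((contDiff_complexGradient hρ).locallyLipschitz.locallyLipschitzOn
    ).exists_lipschitzOnWith_of_compact hcompact
  have hgrad : ∀ w ∈ frontier D, complexGradient ρ w ≠ 0 := by
    intro w hw hw0
    have hwD : w ∉ D := by
      rw [(isOpen_lt hρ.continuous continuous_const).frontier_eq] at hw
      exact hw.2
    have hxw : 0 < ‖w - x‖ := norm_pos_iff.2 (sub_ne_zero.2 (ne_of_mem_of_not_mem hx hwD).symm)
    have hle := hlow x (subset_closure hx) w hw
    rw [hw0, map_zero, zero_apply, norm_zero] at hle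
    exact (mul_pos hc (pow_pos hxw 2)).not_ge hle
  obtain ⟨q, hq, hzero, hsymm, htriangle⟩ :=
    exists_isQuasimetricOn_sqrt_norm_apply_sub_div_norm hc hlip
      (fun z hz w hw ↦ hlow z (frontier_subset_closure hz) w hw) hcompact hgrad
  simp only [norm_Lfun]
  exact ⟨q, hq, hzero, hsymm, htriangle⟩

theorem stmt8 (d : ℕ) (hd : 2 ≤ d) (ρ : EuclideanSpace ℂ (Fin d) → ℝ)
    (hρ : ContDiff ℝ 2 ρ)
    (hbd : IsBounded {z | ρ z < 0})
    (hne : {z | ρ z < 0}.Nonempty)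
    (hgrad : ∀ w ∈ frontier {z | ρ z < 0}, fderiv ℝ ρ w ≠ 0)
    (hconv : ∃ c > (0 : ℝ), ∀ z ∈ closure {z | ρ z < 0}, ∀ w ∈ frontier {z | ρ z < 0},
      c * ‖w - z‖ ^ 2 ≤ ‖∑ j, cderiv ρ w j * (w j - z j)‖) :
    ∃ q : ℝ, 1 ≤ q ∧
      (∀ ζ ∈ frontier {z | ρ z < 0}, ∀ w ∈ frontier {z | ρ z < 0},
        (Real.sqrt (‖Lfun ρ ζ w‖) = 0 ↔ ζ = w)) ∧
      (∀ ζ ∈ frontier {z | ρ z < 0}, ∀ w ∈ frontier {z | ρ z < 0},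
        Real.sqrt (‖Lfun ρ ζ w‖) ≤ q * Real.sqrt (‖Lfun ρ w ζ‖)) ∧
      (∀ ζ ∈ frontier {z | ρ z < 0}, ∀ z₀ ∈ frontier {z | ρ z < 0},
        ∀ w ∈ frontier {z | ρ z < 0},
        Real.sqrt (‖Lfun ρ ζ w‖) ≤
          q * (Real.sqrt (‖Lfun ρ ζ z₀‖) + Real.sqrt (‖Lfun ρ z₀ w‖))) :=
  stmt8_general d ρ hρ hbd hne hconv
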